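/- arXiv:1409.5691 — 4 statements merged into one kernel-verified Lean document; each statement's English description precedes it below -/
import Mathlib

section
/- Any two distinct Conwell heptads have exactly one point in common: if H₁ and H₂ are distinct Conwell heptads of the hyperbolic quadric Q of PG(5,2), then the intersection H₁ ∩ H₂ has cardinality 1. -/
/-- The hyperbolic quadratic form on GF(2)^6. -/
def Q (v : Fin 6 → ZMod 2) : ZMod 2 := v 0 * v 1 + v 2 * v 3 + v 4 * v 5

/-- A Conwell heptad: a set of seven off-quadric points such that the line joining any
two of them is external to the quadric. -/
def IsConwellHeptad (H : Finset (Fin 6 → ZMod 2)) : Prop :=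
  H.card = 7 ∧ (∀ v ∈ H, v ≠ 0 ∧ Q v = 1) ∧
    ∀ a ∈ H, ∀ b ∈ H, a ≠ b → Q (a + b) = 1

/-!
The 28 points off `Q⁺(5,2)` are the duads (2-subsets) of an 8-set, as in `O⁺(6,2) ≅ S₈`: with
`letter 0, …, letter 6` seven pairwise non-orthogonal points off the quadric and `letter 7 = 0`,
the duad `{i, j}` is the point `letter i + letter j`. Points of disjoint duads span a line that
meets the quadric, so the duads of a heptad form an intersecting family of seven 2-sets. Such a
family (more than three members, so not a triangle) is a star `{{i, j} | j ≠ i}`; there are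
eight stars, and two of them share exactly one duad.
-/

open Finset

namespace Finset

variable {α : Type*} [DecidableEq α]

theorem eq_pair_of_card_eq_two {s : Finset α} {a b : α} (hs : #s = 2) (ha : a ∈ s)
    (hb : b ∈ s) (hab : a ≠ b) : s = {a, b} :=
  (eq_of_subset_of_card_le (insert_subset ha (singleton_subset_iff.2 hb))
    (by rw [hs, card_pair hab])).symm

theorem mem_of_not_disjoint_pair {s : Finset α} {a b : α} (h : ¬Disjoint {a, b} s)
    (ha : a ∉ s) : b ∈ s := by
  simpa [disjoint_insert_left, ha] using h

theorem exists_forall_mem_of_intersecting {D : Finset (Finset α)}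
    (hD : (D : Set (Finset α)).Intersecting) (h2 : ∀ d ∈ D, #d = 2) (h4 : 3 < #D) :
    ∃ x, ∀ d ∈ D, x ∈ d := by
  obtain ⟨d₁, hd₁, d₂, hd₂, hne⟩ := one_lt_card.1 (by omega : 1 < #D)
  obtain ⟨x, hx₁, hx₂⟩ := not_disjoint_iff.1 (hD hd₁ hd₂)
  obtain ⟨y, hy, hyx⟩ := exists_mem_ne (by rw [h2 d₁ hd₁]; omega) x
  obtain ⟨z, hz, hzx⟩ := exists_mem_ne (by rw [h2 d₂ hd₂]; omega) x
  have hxy : d₁ = {x, y} := eq_pair_of_card_eq_two (h2 d₁ hd₁) hx₁ hy hyx.symm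
  have hxz : d₂ = {x, z} := eq_pair_of_card_eq_two (h2 d₂ hd₂) hx₂ hz hzx.symm
  have hyz : y ≠ z := by rintro rfl; exact hne (hxy.trans hxz.symm)
  by_contra! hstar
  obtain ⟨e, he, hxe⟩ := hstar x
  have heyz : e = {y, z} := eq_pair_of_card_eq_two (h2 e he)
    (mem_of_not_disjoint_pair (hxy ▸ hD hd₁ he) hxe)
    (mem_of_not_disjoint_pair (hxz ▸ hD hd₂ he) hxe) hyz
  have htriangle : ∀ g ∈ D, g ⊆ {x, y, z} := by
    intro g hg u hu
    rcases eq_or_ne u x with rfl | hux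
    · exact mem_insert_self u _
    by_cases hxg : x ∈ g
    · have hxu := eq_pair_of_card_eq_two (h2 g hg) hxg hu hux.symm
      have hue : u ∈ e := mem_of_not_disjoint_pair (hxu ▸ hD hg he) hxe
      rw [heyz] at hue
      exact mem_insert_of_mem hue
    · have hgyz : g = {y, z} := eq_pair_of_card_eq_two (h2 g hg)
        (mem_of_not_disjoint_pair (hxy ▸ hD hd₁ hg) hxg)
        (mem_of_not_disjoint_pair (hxz ▸ hD hd₂ hg) hxg) hyz
      rw [hgyz] at hu
      exact mem_insert_of_mem hu
  have hD3 : #D ≤ 3 :=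
    calc #D ≤ #(powersetCard 2 ({x, y, z} : Finset α)) :=
        card_le_card fun g hg => mem_powersetCard.2 ⟨htriangle g hg, h2 g hg⟩
      _ ≤ Nat.choose 3 2 := by
        rw [card_powersetCard]; exact Nat.choose_le_choose 2 card_le_three
  omega

variable [Fintype α]

def pairsThrough (i : α) : Finset (Finset α) := (powersetCard 2 univ).filter (i ∈ ·)

theorem pairsThrough_inter_pairsThrough {i j : α} (hij : i ≠ j) :
    pairsThrough i ∩ pairsThrough j = {{i, j}} := by
  ext d
  simp only [pairsThrough, mem_inter, mem_filter, mem_powersetCard, subset_univ, true_and,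
    mem_singleton]
  constructor
  · rintro ⟨⟨hd, hi⟩, -, hj⟩
    exact eq_pair_of_card_eq_two hd hi hj hij
  · rintro rfl
    simp [card_pair hij]

end Finset

def letter : Fin 8 → Fin 6 → ZMod 2 :=
  ![![0,0,0,0,1,1], ![0,0,1,1,0,1], ![0,1,1,1,1,0], ![1,0,1,1,1,0], ![1,1,0,0,1,0],
    ![1,1,0,1,0,1], ![1,1,1,0,0,1], 0]

def duadPoint (d : Finset (Fin 8)) : Fin 6 → ZMod 2 := ∑ m ∈ d, letter m

def offQuadric : Finset (Fin 6 → ZMod 2) := univ.filter fun v => v ≠ 0 ∧ Q v = 1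

theorem image_duadPoint : (powersetCard 2 univ).image duadPoint = offQuadric := by decide

theorem injOn_duadPoint :
    Set.InjOn duadPoint (powersetCard 2 univ : Finset (Finset (Fin 8))) :=
  card_image_iff.1 (by rw [image_duadPoint]; decide)

theorem Q_letter_add_letter : ∀ i j, i ≠ j → Q (letter i + letter j) = 1 := by decide

theorem card_pairsThrough : ∀ i : Fin 8, #(pairsThrough i) = 7 := by decide

theorem Q_add_add_add (a b c d : Fin 6 → ZMod 2) :
    Q (a + b + c + d) =
      Q (a + b) + Q (a + c) + Q (a + d) + Q (b + c) + Q (b + d) + Q (c + d) := by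
  -- over any ring the right side exceeds the left by `2 * (Q a + Q b + Q c + Q d)`
  have h2 : (2 : ZMod 2) = 0 := rfl
  linear_combination (norm := skip) (-(Q a + Q b + Q c + Q d)) * h2
  simp only [Q, Pi.add_apply]
  ring

theorem Q_duadPoint_add_of_disjoint {d e : Finset (Fin 8)} (hd : #d = 2) (he : #e = 2)
    (hde : Disjoint d e) : Q (duadPoint d + duadPoint e) = 0 := by
  obtain ⟨i, j, hij, rfl⟩ := card_eq_two.1 hd
  obtain ⟨k, l, hkl, rfl⟩ := card_eq_two.1 he
  simp only [disjoint_insert_left, disjoint_insert_right, disjoint_singleton, mem_insert,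
    mem_singleton, not_or] at hde
  rw [duadPoint, duadPoint, sum_pair hij, sum_pair hkl, ← add_assoc, Q_add_add_add,
    Q_letter_add_letter _ _ hij, Q_letter_add_letter _ _ (Ne.symm hde.1.1),
    Q_letter_add_letter _ _ hde.2.1, Q_letter_add_letter _ _ (Ne.symm hde.1.2),
    Q_letter_add_letter _ _ hde.2.2, Q_letter_add_letter _ _ hkl]
  rfl

def duadsOf (H : Finset (Fin 6 → ZMod 2)) : Finset (Finset (Fin 8)) :=
  (powersetCard 2 univ).filter (duadPoint · ∈ H)

theorem injOn_duadsOf (H : Finset (Fin 6 → ZMod 2)) : Set.InjOn duadPoint (duadsOf H) :=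
  injOn_duadPoint.mono (filter_subset _ _)

theorem card_eq_two_of_mem_duadsOf {H : Finset (Fin 6 → ZMod 2)} {d : Finset (Fin 8)}
    (hd : d ∈ duadsOf H) : #d = 2 :=
  (mem_powersetCard.1 (mem_filter.1 hd).1).2

theorem image_duadsOf {H : Finset (Fin 6 → ZMod 2)} (hH : ∀ v ∈ H, v ≠ 0 ∧ Q v = 1) :
    (duadsOf H).image duadPoint = H := by
  rw [duadsOf, ← filter_image (p := (· ∈ H)), image_duadPoint, filter_mem_eq_inter,
    inter_eq_right]
  exact fun v hv => mem_filter.2 ⟨mem_univ v, hH v hv⟩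

theorem IsConwellHeptad.intersecting_duadsOf {H : Finset (Fin 6 → ZMod 2)}
    (h : IsConwellHeptad H) : (duadsOf H : Set (Finset (Fin 8))).Intersecting := by
  intro d hd e he hde
  rcases eq_or_ne d e with rfl | hne
  · rw [disjoint_self_iff_empty] at hde
    simpa [hde] using card_eq_two_of_mem_duadsOf hd
  · have hQ := h.2.2 _ (mem_filter.1 hd).2 _ (mem_filter.1 he).2 ((injOn_duadsOf H).ne hd he hne)
    rw [Q_duadPoint_add_of_disjoint (card_eq_two_of_mem_duadsOf hd)
      (card_eq_two_of_mem_duadsOf he) hde] at hQ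
    exact zero_ne_one hQ

theorem IsConwellHeptad.exists_eq_image_pairsThrough {H : Finset (Fin 6 → ZMod 2)}
    (h : IsConwellHeptad H) : ∃ i, H = (pairsThrough i).image duadPoint := by
  have hDH := image_duadsOf h.2.1
  have hcard : #(duadsOf H) = 7 := by
    rw [← card_image_of_injOn (injOn_duadsOf H), hDH, h.1]
  obtain ⟨i, hi⟩ := exists_forall_mem_of_intersecting h.intersecting_duadsOf
    (fun d => card_eq_two_of_mem_duadsOf) (by omega)
  have hDi : duadsOf H = pairsThrough i := eq_of_subset_of_card_le
    (fun d hd => mem_filter.2 ⟨(mem_filter.1 hd).1, hi d hd⟩)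
    (by rw [card_pairsThrough, hcard])
  exact ⟨i, by rw [← hDH, hDi]⟩

/-- Any two distinct Conwell heptads share exactly one point. -/
theorem conwell_heptads_intersect_in_one (H₁ H₂ : Finset (Fin 6 → ZMod 2))
    (h₁ : IsConwellHeptad H₁) (h₂ : IsConwellHeptad H₂) (hne : H₁ ≠ H₂) :
    (H₁ ∩ H₂).card = 1 := by
  obtain ⟨i, rfl⟩ := h₁.exists_eq_image_pairsThrough
  obtain ⟨j, rfl⟩ := h₂.exists_eq_image_pairsThrough
  have hij : i ≠ j := by rintro rfl; exact hne rfl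
  have hinj : Set.InjOn duadPoint (↑(pairsThrough i) ∪ ↑(pairsThrough j)) :=
    injOn_duadPoint.mono (Set.union_subset (filter_subset _ _) (filter_subset _ _))
  rw [← image_inter_of_injOn _ _ hinj, pairsThrough_inter_pairsThrough hij, image_singleton,
    card_singleton]
end

section
/- Under any isomorphism with G₂(8), Conwell heptads correspond exactly to stars: let f be a bijection from the off-quadric points {v : Fin 6 → ZMod 2 | v ≠ 0 ∧ Q v = 1} to the 2-element subsets of Fin 8 such that for all pairwise distinct off-quadric a, b, c, a + b + c = 0 iff (f(a) ∪ f(b) ∪ f(c)).card = 3. Then a set H of off-quadric points is a Conwell heptad if and only if there exists i : Fin 8 such that the image f(H) equals the set of all 2-element subsets of Fin 8 containing i. -/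
open Finset

section Pairs

variable {α : Type*} [DecidableEq α]

theorem Finset.exists_ne_eq_pair_of_card_eq_two {s : Finset α} (hs : #s = 2) {i : α}
    (hi : i ∈ s) : ∃ x, x ≠ i ∧ s = {i, x} := by
  obtain ⟨a, b, hab, rfl⟩ := card_eq_two.mp hs
  rcases mem_insert.mp hi with rfl | hb
  · exact ⟨b, hab.symm, rfl⟩
  · rw [mem_singleton.mp hb]
    exact ⟨a, hab, pair_comm a b⟩

theorem Finset.eq_pair_of_card_eq_two_s9 {s : Finset α} (hs : #s = 2) {x y : α} (hxy : x ≠ y)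
    (hx : x ∈ s) (hy : y ∈ s) : s = {x, y} :=
  (eq_of_subset_of_card_le (insert_subset hx (singleton_subset_iff.2 hy))
    (by rw [hs, card_pair hxy])).symm

theorem Finset.mem_of_not_disjoint_pair_s9 {s : Finset α} {i x : α} (hi : i ∉ s)
    (h : ¬Disjoint s {i, x}) : x ∈ s := by
  contrapose! h
  rw [disjoint_insert_right, disjoint_singleton_right]
  exact ⟨hi, h⟩

theorem Finset.eq_side_of_not_disjoint_triangle {i x y : α} (hix : i ≠ x) (hiy : i ≠ y)
    (hxy : x ≠ y) {s : Finset α} (hs : #s = 2) (hsx : ¬Disjoint s {i, x})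
    (hsy : ¬Disjoint s {i, y}) (hsxy : ¬Disjoint s {x, y}) :
    s = {i, x} ∨ s = {i, y} ∨ s = {x, y} := by
  by_cases hi : i ∈ s
  · obtain ⟨z, hzs, hz⟩ := not_disjoint_iff.mp hsxy
    rcases mem_insert.mp hz with rfl | hz
    · exact .inl (eq_pair_of_card_eq_two_s9 hs hix hi hzs)
    · rw [mem_singleton.mp hz] at hzs
      exact .inr (.inl (eq_pair_of_card_eq_two_s9 hs hiy hi hzs))
  · exact .inr (.inr (eq_pair_of_card_eq_two_s9 hs hxy
      (mem_of_not_disjoint_pair_s9 hi hsx) (mem_of_not_disjoint_pair_s9 hi hsy)))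

theorem Set.Intersecting.exists_forall_mem_of_card_eq_two {T : Finset (Finset α)}
    (hT : (T : Set (Finset α)).Intersecting) (h2 : ∀ s ∈ T, #s = 2) (h4 : 4 ≤ #T) :
    ∃ i, ∀ s ∈ T, i ∈ s := by
  obtain ⟨s, hs, t, ht, hst⟩ := one_lt_card.mp (by omega : 1 < #T)
  obtain ⟨i, his, hit⟩ := hT.exists_mem_finset hs ht
  by_contra! hnot
  obtain ⟨u, hu, hiu⟩ := hnot i
  obtain ⟨x, hxi, rfl⟩ := exists_ne_eq_pair_of_card_eq_two (h2 s hs) his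
  obtain ⟨y, hyi, rfl⟩ := exists_ne_eq_pair_of_card_eq_two (h2 t ht) hit
  have hxy : x ≠ y := by rintro rfl; exact hst rfl
  obtain rfl : u = {x, y} := eq_pair_of_card_eq_two_s9 (h2 u hu) hxy
    (mem_of_not_disjoint_pair_s9 hiu (hT hu hs)) (mem_of_not_disjoint_pair_s9 hiu (hT hu ht))
  have hsub : T ⊆ {{i, x}, {i, y}, {x, y}} := fun w hw => by
    simpa using eq_side_of_not_disjoint_triangle hxi.symm hyi.symm hxy (h2 w hw)
      (hT hw hs) (hT hw ht) (hT hw hu)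
  have hcard := (Finset.card_le_card hsub).trans card_le_three
  omega

theorem Finset.card_filter_card_eq_two_mem [Fintype α] (i : α) :
    #{s : Finset α | #s = 2 ∧ i ∈ s} = Fintype.card α - 1 := by
  have hstar : ({s : Finset α | #s = 2 ∧ i ∈ s} : Finset _) =
      (univ.erase i).image fun x => {i, x} := by
    ext s
    simp only [mem_filter, mem_univ, true_and, mem_image, mem_erase, and_true]
    constructor
    · rintro ⟨hs, hi⟩
      obtain ⟨x, hx, rfl⟩ := exists_ne_eq_pair_of_card_eq_two hs hi
      exact ⟨x, hx, rfl⟩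
    · rintro ⟨x, hx, rfl⟩
      exact ⟨card_pair hx.symm, mem_insert_self i {x}⟩
  rw [hstar, card_image_of_injOn, card_erase_of_mem (mem_univ i), card_univ]
  intro x hx y _ hxy
  have hx' : x ∈ ({i, y} : Finset α) := by
    rw [← show ({i, x} : Finset α) = {i, y} from hxy]
    exact mem_insert_of_mem (mem_singleton_self x)
  simpa [(mem_erase.mp hx).1] using hx'

theorem Finset.intersecting_and_card_eq_iff_exists_eq_star [Fintype α]
    (hα : 5 ≤ Fintype.card α) {T : Finset (Finset α)} (h2 : ∀ s ∈ T, #s = 2) :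
    (#T = Fintype.card α - 1 ∧ (T : Set (Finset α)).Intersecting) ↔
      ∃ i, T = ({s | #s = 2 ∧ i ∈ s} : Finset (Finset α)) := by
  constructor
  · rintro ⟨hcard, hT⟩
    obtain ⟨i, hi⟩ := hT.exists_forall_mem_of_card_eq_two h2 (by omega)
    refine ⟨i, eq_of_subset_of_card_le
      (fun s hs => mem_filter.2 ⟨mem_univ s, h2 s hs, hi s hs⟩) ?_⟩
    rw [card_filter_card_eq_two_mem, hcard]
  · rintro ⟨i, rfl⟩
    exact ⟨card_filter_card_eq_two_mem i, fun s hs t ht =>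
      not_disjoint_iff.2 ⟨i, (mem_filter.1 hs).2.2, (mem_filter.1 ht).2.2⟩⟩

end Pairs

section LinePreserving

variable {V α : Type*} [Ring V] [CharP V 2] [DecidableEq α] {p : V → Prop}

def PreservesLines (f : {v // p v} ≃ {s : Finset α // #s = 2}) : Prop :=
  ∀ a b c : {v // p v}, a ≠ b → a ≠ c → b ≠ c →
    ((a : V) + b + c = 0 ↔ #((f a : Finset α) ∪ f b ∪ f c) = 3)

variable {f : {v // p v} ≃ {s : Finset α // #s = 2}}

theorem PreservesLines.not_disjoint_of_add (hf : PreservesLines f) (hp0 : ¬p 0)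
    {a b : {v // p v}} (hab : a ≠ b) (h : p (a + b)) : ¬Disjoint (f a : Finset α) (f b) := by
  let c : {v // p v} := ⟨a + b, h⟩
  have hac : a ≠ c := fun hc => hp0 (left_eq_add.1 (congrArg Subtype.val hc) ▸ b.2)
  have hbc : b ≠ c := fun hc => hp0 (right_eq_add.1 (congrArg Subtype.val hc) ▸ a.2)
  have h3 := (hf a b c hab hac hbc).1 (CharTwo.add_self_eq_zero _)
  have hle : #((f a : Finset α) ∪ f b) ≤ 3 := h3 ▸ Finset.card_le_card subset_union_left
  have hunion := card_union_add_card_inter (f a : Finset α) (f b)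
  rw [(f a).2, (f b).2] at hunion
  rw [not_disjoint_iff_nonempty_inter, ← card_pos]
  omega

theorem PreservesLines.add_of_not_disjoint (hf : PreservesLines f) {a b : {v // p v}}
    (hab : a ≠ b) (h : ¬Disjoint (f a : Finset α) (f b)) : p (a + b) := by
  obtain ⟨i, hia, hib⟩ := not_disjoint_iff.1 h
  obtain ⟨x, hxi, hax⟩ := exists_ne_eq_pair_of_card_eq_two (f a).2 hia
  obtain ⟨y, hyi, hby⟩ := exists_ne_eq_pair_of_card_eq_two (f b).2 hib
  have hxy : x ≠ y := by
    rintro rfl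
    exact hab (f.injective (Subtype.ext (hax.trans hby.symm)))
  let c := f.symm ⟨{x, y}, card_pair hxy⟩
  have hfc : (f c : Finset α) = {x, y} := by simp [c]
  have hic : i ∉ (f c : Finset α) := by simp [hfc, hxi.symm, hyi.symm]
  have hac : a ≠ c := by rintro rfl; exact hic hia
  have hbc : b ≠ c := by rintro rfl; exact hic hib
  have h3 : #((f a : Finset α) ∪ f b ∪ f c) = 3 := by
    rw [hax, hby, hfc, show ({i, x} ∪ {i, y} ∪ {x, y} : Finset α) = {i, x, y} by
      ext; simp only [mem_union, mem_insert, mem_singleton]; tauto]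
    exact card_eq_three.2 ⟨i, x, y, hxi.symm, hyi.symm, hxy, rfl⟩
  have hsum : (a : V) + b = c := CharTwo.add_eq_zero.1 ((hf a b c hab hac hbc).2 h3)
  exact hsum ▸ c.2

theorem PreservesLines.add_iff_not_disjoint (hf : PreservesLines f) (hp0 : ¬p 0)
    {a b : {v // p v}} (hab : a ≠ b) : p (a + b) ↔ ¬Disjoint (f a : Finset α) (f b) :=
  ⟨hf.not_disjoint_of_add hp0 hab, hf.add_of_not_disjoint hab⟩

end LinePreserving

/-- Under any isomorphism of the off-quadric configuration with G₂(8), the Conwell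
heptads correspond exactly to the "stars": the sets of all 2-element subsets of `Fin 8`
sharing a fixed mark `i`. -/
theorem conwell_heptads_are_stars
    (f : {v : Fin 6 → ZMod 2 // v ≠ 0 ∧ Q v = 1} ≃ {s : Finset (Fin 8) // s.card = 2})
    (hf : ∀ a b c : {v : Fin 6 → ZMod 2 // v ≠ 0 ∧ Q v = 1},
      a ≠ b → a ≠ c → b ≠ c →
      ((a : Fin 6 → ZMod 2) + (b : Fin 6 → ZMod 2) + (c : Fin 6 → ZMod 2) = 0 ↔
        ((f a : Finset (Fin 8)) ∪ (f b : Finset (Fin 8)) ∪ (f c : Finset (Fin 8))).card = 3))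
    (H : Finset {v : Fin 6 → ZMod 2 // v ≠ 0 ∧ Q v = 1}) :
    (H.card = 7 ∧ ∀ a ∈ H, ∀ b ∈ H, a ≠ b →
        Q ((a : Fin 6 → ZMod 2) + (b : Fin 6 → ZMod 2)) = 1) ↔
      ∃ i : Fin 8, H.image (fun a => (f a : Finset (Fin 8))) =
        Finset.univ.filter (fun s : Finset (Fin 8) => s.card = 2 ∧ i ∈ s) := by
  have hlines : PreservesLines f := hf
  have hinj : Function.Injective fun a => (f a : Finset (Fin 8)) :=
    Subtype.val_injective.comp f.injective
  rw [← intersecting_and_card_eq_iff_exists_eq_star (by simp)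
      (forall_mem_image.2 fun a _ => (f a).2),
    card_image_of_injective _ hinj]
  refine and_congr_right fun _ => ?_
  simp only [coe_image, Set.Intersecting, Set.forall_mem_image]
  refine forall₂_congr fun a _ => forall₂_congr fun b _ => ?_
  rcases eq_or_ne a b with rfl | hab
  · simp [← nonempty_iff_ne_empty, ← card_pos, (f a).2]
  · rw [← hlines.add_iff_not_disjoint (fun h => h.1 rfl) hab]
    simp [hab, CharTwo.add_eq_zero, Subtype.coe_ne_coe.2 hab]
end

section
/- For any Conwell heptad H, exactly 21 of the 56 external lines meet H (necessarily in two points) and exactly 35 external lines are disjoint from H; that is, the number of 3-element sets L of nonzero vectors of (Fin 6 → ZMod 2), each with Q-value 1, summing to 0, with L ∩ H ≠ ∅ is 21, and the number of such L with L ∩ H = ∅ is 35. -/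
/-!
Over GF(2), `Q (x + y) = Q x + Q y + polar Q x y`, so the heptad condition says that
`polar Q a b = 1` for distinct `a, b ∈ H`. Hence `g ∈ H` has polar value `1` against `a + b`
exactly when `g ∈ {a, b}`: a pair of `H` is recovered from its sum, and `a + b ∉ H`. So the 21
pair sums are exactly the `28 - 7` points off the quadric outside `H`.

A line through `a ∈ H` is `{a, x, a + x}` with `x` or `a + x` in `H` (otherwise `x = b + c` and
`Q (a + b + c) = 0`), so it is `{a, b, a + b}` for a pair of `H`. A line `{a + b, c + d, …}`
missing `H` has `polar Q (a + b) (c + d) = 1`, so the two pairs share exactly one point and the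
line is `{p + q, p + r, q + r}` for a triple of `H`. Hence `C(7,2) = 21` and `C(7,3) = 35`.
-/

open Finset QuadraticMap

local notation "V" => Fin 6 → ZMod 2

theorem Finset.exists_eq_pair_of_mem_powersetCard_two {α : Type*} [DecidableEq α]
    {s t : Finset α} (h : s ∈ t.powersetCard 2) :
    ∃ a ∈ t, ∃ b ∈ t, a ≠ b ∧ s = {a, b} := by
  obtain ⟨hst, hs⟩ := mem_powersetCard.1 h
  obtain ⟨a, b, hab, rfl⟩ := card_eq_two.1 hs
  exact ⟨a, hst (by simp), b, hst (by simp), hab, rfl⟩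

theorem Finset.exists_eq_triple_of_mem_powersetCard_three {α : Type*} [DecidableEq α]
    {s t : Finset α} (h : s ∈ t.powersetCard 3) :
    ∃ a ∈ t, ∃ b ∈ t, ∃ c ∈ t, a ≠ b ∧ a ≠ c ∧ b ≠ c ∧ s = {a, b, c} := by
  obtain ⟨hst, hs⟩ := mem_powersetCard.1 h
  obtain ⟨a, b, c, hab, hac, hbc, rfl⟩ := card_eq_three.1 hs
  exact ⟨a, hst (by simp), b, hst (by simp), c, hst (by simp), hab, hac, hbc, rfl⟩

theorem Finset.insert_sum_pair {M : Type*} [AddCommMonoid M] [DecidableEq M] {a b : M}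
    (hab : a ≠ b) : insert (∑ v ∈ {a, b}, v) ({a, b} : Finset M) = {a, b, a + b} := by
  rw [sum_pair hab, insert_comm, pair_comm]

theorem Finset.exists_eq_triple_of_sum_eq_zero {R : Type*} [Ring R] [CharP R 2] [DecidableEq R]
    {L : Finset R} {a : R} (hL : L.card = 3) (hsum : ∑ v ∈ L, v = 0) (ha : a ∈ L) :
    ∃ x, L = {a, x, a + x} := by
  obtain ⟨x, y, hxy, hL'⟩ := card_eq_two.1 (by rw [card_erase_of_mem ha, hL] :
    (L.erase a).card = 2)
  have hxy : x + y = a := by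
    have h := add_sum_erase L (fun v => v) ha
    rw [hL', sum_pair hxy, hsum] at h
    exact (CharTwo.add_eq_zero.1 h).symm
  refine ⟨x, ?_⟩
  rw [← insert_erase ha, hL', ← hxy, add_comm x y, CharTwo.add_cancel_right]

theorem Finset.image_add_sum_triple {R : Type*} [CommRing R] [CharP R 2] [DecidableEq R]
    {p q r : R} (hpq : p ≠ q) (hpr : p ≠ r) (hqr : q ≠ r) :
    ({p, q, r} : Finset R).image (· + ∑ v ∈ {p, q, r}, v) =
      {p + q, p + r, p + q + (p + r)} := by
  rw [sum_insert (by simp [hpq, hpr]), sum_pair hqr]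
  ext x
  simp only [mem_image, mem_insert, mem_singleton]
  grind

theorem polar_Q_apply (x y : V) :
    polar Q x y = x 0 * y 1 + x 1 * y 0 + x 2 * y 3 + x 3 * y 2 + x 4 * y 5 + x 5 * y 4 := by
  rw [polar, sub_sub, sub_eq_iff_eq_add]
  simp only [Q, Pi.add_apply]
  ring

theorem Q_add (x y : V) : Q (x + y) = Q x + Q y + polar Q x y := by
  rw [polar_Q_apply]
  simp only [Q, Pi.add_apply]
  ring

theorem polar_Q_add_left (x y z : V) : polar Q (x + y) z = polar Q x z + polar Q y z := by
  simp only [polar_Q_apply, Pi.add_apply]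
  ring

theorem polar_Q_add_right (x y z : V) : polar Q x (y + z) = polar Q x y + polar Q x z := by
  simp only [polar_Q_apply, Pi.add_apply]
  ring

theorem Q_zero : Q 0 = 0 := by simp [Q]

theorem polar_Q_self (x : V) : polar Q x x = 0 := by
  have h := Q_add x x
  rwa [CharTwo.add_self_eq_zero, CharTwo.add_self_eq_zero, Q_zero, zero_add, eq_comm] at h

theorem ne_zero_of_Q_eq_one {x : V} (h : Q x = 1) : x ≠ 0 := by
  rintro rfl
  exact zero_ne_one (Q_zero ▸ h)

theorem card_filter_Q_eq_one : #{v : V | Q v = 1} = 28 := by decide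

def polarSupport (H : Finset V) (x : V) : Finset V := {g ∈ H | polar Q g x = 1}

namespace IsConwellHeptad

variable {H : Finset V} {a b c d g x : V}

theorem polar_eq_ite (hH : IsConwellHeptad H) (hg : g ∈ H) (hc : c ∈ H) :
    polar Q g c = if g = c then 0 else 1 := by
  split_ifs with h
  · rw [h, polar_Q_self]
  · have hgc := hH.2.2 g hg c hc h
    rwa [Q_add, (hH.2.1 g hg).2, (hH.2.1 c hc).2, CharTwo.add_self_eq_zero, zero_add] at hgc

theorem polar_add_eq_ite (hH : IsConwellHeptad H) (hg : g ∈ H) (ha : a ∈ H) (hb : b ∈ H)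
    (hab : a ≠ b) : polar Q g (a + b) = if g = a ∨ g = b then 1 else 0 := by
  rw [polar_Q_add_right, hH.polar_eq_ite hg ha, hH.polar_eq_ite hg hb]
  by_cases hga : g = a
  · subst hga
    simp [hab]
  · by_cases hgb : g = b
    · simp [hgb, hab.symm]
    · simp only [hga, hgb, if_false]
      decide

theorem polarSupport_of_mem (hH : IsConwellHeptad H) (hc : c ∈ H) :
    polarSupport H c = H.erase c := by
  ext g
  simp only [polarSupport, mem_filter, mem_erase, and_comm (a := g ≠ c)]
  refine and_congr_right fun hg => ?_
  rw [hH.polar_eq_ite hg hc]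
  split_ifs <;> simp [*]

theorem polarSupport_add (hH : IsConwellHeptad H) (ha : a ∈ H) (hb : b ∈ H) (hab : a ≠ b) :
    polarSupport H (a + b) = {a, b} := by
  ext g
  simp only [polarSupport, mem_filter, mem_insert, mem_singleton]
  constructor
  · rintro ⟨hg, h⟩
    rw [hH.polar_add_eq_ite hg ha hb hab] at h
    split_ifs at h with h'
    exacts [h', absurd h zero_ne_one]
  · rintro (rfl | rfl) <;> simp [hH.polar_add_eq_ite ‹_› ha hb hab, *]

theorem add_notMem (hH : IsConwellHeptad H) (ha : a ∈ H) (hb : b ∈ H) (hab : a ≠ b) :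
    a + b ∉ H := fun h => by
  have hcard := congrArg card
    ((hH.polarSupport_add ha hb hab).symm.trans (hH.polarSupport_of_mem h))
  rw [card_pair hab, card_erase_of_mem h, hH.1] at hcard
  omega

theorem polarSupport_sum (hH : IsConwellHeptad H) {s : Finset V}
    (hs : s ∈ H.powersetCard 2) :
    polarSupport H (∑ v ∈ s, v) = s := by
  obtain ⟨a, ha, b, hb, hab, rfl⟩ := exists_eq_pair_of_mem_powersetCard_two hs
  rw [sum_pair hab, hH.polarSupport_add ha hb hab]

theorem injOn_sum_powersetCard_two (hH : IsConwellHeptad H) :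
    Set.InjOn (fun s => ∑ v ∈ s, v) (H.powersetCard 2 : Set (Finset V)) :=
  fun _ hs _ ht hst => (hH.polarSupport_sum hs).symm.trans
    ((congrArg (polarSupport H) hst).trans (hH.polarSupport_sum ht))

theorem sum_mem_sdiff (hH : IsConwellHeptad H) {s : Finset V} (hs : s ∈ H.powersetCard 2) :
    ∑ v ∈ s, v ∈ ({v | Q v = 1} : Finset V) \ H := by
  obtain ⟨a, ha, b, hb, hab, rfl⟩ := exists_eq_pair_of_mem_powersetCard_two hs
  rw [sum_pair hab, mem_sdiff, mem_filter]
  exact ⟨⟨mem_univ _, hH.2.2 a ha b hb hab⟩, hH.add_notMem ha hb hab⟩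

theorem image_sum_powersetCard_two (hH : IsConwellHeptad H) :
    (H.powersetCard 2).image (fun s => ∑ v ∈ s, v) = ({v | Q v = 1} : Finset V) \ H := by
  have hH_sub : H ⊆ ({v | Q v = 1} : Finset V) :=
    fun v hv => mem_filter.2 ⟨mem_univ v, (hH.2.1 v hv).2⟩
  refine eq_of_subset_of_card_le (image_subset_iff.2 fun s hs => hH.sum_mem_sdiff hs) ?_
  rw [card_sdiff_of_subset hH_sub, card_filter_Q_eq_one,
    card_image_of_injOn hH.injOn_sum_powersetCard_two, card_powersetCard, hH.1]
  rfl

theorem exists_add_eq_of_notMem (hH : IsConwellHeptad H) (hx : Q x = 1) (hxH : x ∉ H) :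
    ∃ a ∈ H, ∃ b ∈ H, a ≠ b ∧ a + b = x := by
  have hx' : x ∈ (H.powersetCard 2).image (fun s => ∑ v ∈ s, v) := by
    rw [hH.image_sum_powersetCard_two]
    exact mem_sdiff.2 ⟨mem_filter.2 ⟨mem_univ x, hx⟩, hxH⟩
  obtain ⟨s, hs, rfl⟩ := mem_image.1 hx'
  obtain ⟨a, ha, b, hb, hab, rfl⟩ := exists_eq_pair_of_mem_powersetCard_two hs
  exact ⟨a, ha, b, hb, hab, by rw [sum_pair hab]⟩

theorem Q_add_add_eq_zero (hH : IsConwellHeptad H) (ha : a ∈ H) (hb : b ∈ H) (hc : c ∈ H)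
    (hab : a ≠ b) (hac : a ≠ c) (hbc : b ≠ c) : Q (a + b + c) = 0 := by
  rw [Q_add, polar_comm, hH.polar_add_eq_ite hc ha hb hab,
    if_neg (not_or.2 ⟨hac.symm, hbc.symm⟩), hH.2.2 a ha b hb hab, (hH.2.1 c hc).2,
    CharTwo.add_self_eq_zero, add_zero]

theorem mem_or_add_mem (hH : IsConwellHeptad H) (ha : a ∈ H) (hx : Q x = 1)
    (hax : Q (a + x) = 1) : x ∈ H ∨ a + x ∈ H := by
  by_contra! h
  obtain ⟨b, hb, c, hc, hbc, rfl⟩ := hH.exists_add_eq_of_notMem hx h.1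
  have hab : a ≠ b := by
    rintro rfl
    exact h.2 (by rwa [CharTwo.add_cancel_left])
  have hac : a ≠ c := by
    rintro rfl
    exact h.2 (by rwa [add_comm b a, CharTwo.add_cancel_left])
  rw [← add_assoc, hH.Q_add_add_eq_zero ha hb hc hab hac hbc] at hax
  exact zero_ne_one hax

theorem exists_common_of_polar_add_add_eq_one (hH : IsConwellHeptad H) (ha : a ∈ H)
    (hb : b ∈ H) (hc : c ∈ H) (hd : d ∈ H) (hab : a ≠ b) (hcd : c ≠ d)
    (h : polar Q (a + b) (c + d) = 1) :
    ∃ p ∈ H, ∃ q ∈ H, ∃ r ∈ H,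
      p ≠ q ∧ p ≠ r ∧ q ≠ r ∧ a + b = p + q ∧ c + d = p + r := by
  rw [polar_Q_add_left, hH.polar_add_eq_ite ha hc hd hcd,
    hH.polar_add_eq_ite hb hc hd hcd] at h
  -- `h` says that exactly one of `a`, `b` lies in `{c, d}`
  by_cases hacd : a = c ∨ a = d
  · have hbcd : ¬(b = c ∨ b = d) := fun hbcd => by
      rw [if_pos hacd, if_pos hbcd] at h
      exact absurd h (by decide)
    rcases hacd with rfl | rfl
    · exact ⟨a, ha, b, hb, d, hd, hab, hcd, fun h => hbcd (Or.inr h), rfl, rfl⟩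
    · exact ⟨a, ha, b, hb, c, hc, hab, hcd.symm, fun h => hbcd (Or.inl h), rfl, add_comm c a⟩
  · have hbcd : b = c ∨ b = d := by
      by_contra hbcd
      rw [if_neg hacd, if_neg hbcd] at h
      exact absurd h (by decide)
    rcases hbcd with rfl | rfl
    · exact ⟨b, hb, a, ha, d, hd, hab.symm, hcd, fun h => hacd (Or.inr h), add_comm a b, rfl⟩
    · exact ⟨b, hb, a, ha, c, hc, hab.symm, hcd.symm, fun h => hacd (Or.inl h), add_comm a b,
        add_comm c b⟩

end IsConwellHeptad

def IsExternalLine (L : Finset V) : Prop :=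
  L.card = 3 ∧ ∑ v ∈ L, v = 0 ∧ ∀ v ∈ L, v ≠ 0 ∧ Q v = 1

instance : DecidablePred IsExternalLine := fun _ => inferInstanceAs (Decidable (_ ∧ _ ∧ _))

theorem isExternalLine_triple {x y : V} (hx : Q x = 1) (hy : Q y = 1) (hxy : Q (x + y) = 1) :
    IsExternalLine {x, y, x + y} := by
  have hQ : ∀ v ∈ ({x, y, x + y} : Finset V), Q v = 1 := by simp [hx, hy, hxy]
  have hne : x ≠ y := by
    rintro rfl
    exact ne_zero_of_Q_eq_one hxy (CharTwo.add_self_eq_zero x)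
  have hx' : x ≠ x + y := fun h => ne_zero_of_Q_eq_one hy (left_eq_add.1 h)
  have hy' : y ≠ x + y := fun h => ne_zero_of_Q_eq_one hx (right_eq_add.1 h)
  refine ⟨card_eq_three.2 ⟨x, y, x + y, hne, hx', hy', rfl⟩, ?_,
    fun v hv => ⟨ne_zero_of_Q_eq_one (hQ v hv), hQ v hv⟩⟩
  rw [sum_insert (by simp [hne, hx']), sum_pair hy', ← add_assoc, CharTwo.add_self_eq_zero]

theorem IsExternalLine.exists_eq_triple {L : Finset V} {a : V} (hL : IsExternalLine L)
    (ha : a ∈ L) : ∃ x, Q x = 1 ∧ Q (a + x) = 1 ∧ L = {a, x, a + x} := by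
  obtain ⟨x, rfl⟩ := exists_eq_triple_of_sum_eq_zero hL.1 hL.2.1 ha
  exact ⟨x, (hL.2.2 x (by simp)).2, (hL.2.2 _ (by simp)).2, rfl⟩

namespace IsConwellHeptad

variable {H : Finset V} {s : Finset V}

theorem isExternalLine_insert_sum (hH : IsConwellHeptad H) (hs : s ∈ H.powersetCard 2) :
    IsExternalLine (insert (∑ v ∈ s, v) s) := by
  obtain ⟨a, ha, b, hb, hab, rfl⟩ := exists_eq_pair_of_mem_powersetCard_two hs
  rw [insert_sum_pair hab]
  exact isExternalLine_triple (hH.2.1 a ha).2 (hH.2.1 b hb).2 (hH.2.2 a ha b hb hab)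

theorem insert_sum_inter (hH : IsConwellHeptad H) (hs : s ∈ H.powersetCard 2) :
    insert (∑ v ∈ s, v) s ∩ H = s := by
  rw [insert_inter_of_notMem (mem_sdiff.1 (hH.sum_mem_sdiff hs)).2,
    inter_eq_left.2 (mem_powersetCard.1 hs).1]

theorem exists_insert_sum_eq (hH : IsConwellHeptad H) {L : Finset V} (hL : IsExternalLine L)
    (hLH : (L ∩ H).Nonempty) : ∃ s ∈ H.powersetCard 2, insert (∑ v ∈ s, v) s = L := by
  obtain ⟨a, haLH⟩ := hLH
  obtain ⟨haL, ha⟩ := mem_inter.1 haLH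
  obtain ⟨x, hx, hax, rfl⟩ := hL.exists_eq_triple haL
  have hax' : a ≠ x := fun h => ne_zero_of_Q_eq_one hax (h ▸ CharTwo.add_self_eq_zero x)
  have ha' : a ≠ a + x := fun h => ne_zero_of_Q_eq_one hx (left_eq_add.1 h)
  rcases hH.mem_or_add_mem ha hx hax with hxH | haxH
  · refine ⟨{a, x}, mem_powersetCard.2 ⟨?_, card_pair hax'⟩, insert_sum_pair hax'⟩
    exact insert_subset ha (singleton_subset_iff.2 hxH)
  · refine ⟨{a, a + x}, mem_powersetCard.2 ⟨?_, card_pair ha'⟩, ?_⟩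
    · exact insert_subset ha (singleton_subset_iff.2 haxH)
    · rw [insert_sum_pair ha', CharTwo.add_cancel_left, pair_comm]

theorem card_filter_isExternalLine_inter_nonempty (hH : IsConwellHeptad H) :
    #{L | IsExternalLine L ∧ (L ∩ H).Nonempty} = 21 := by
  have hcard : #(H.powersetCard 2) = 21 := by rw [card_powersetCard, hH.1]; rfl
  rw [← hcard]
  refine (card_nbij (fun s => insert (∑ v ∈ s, v) s) (fun s hs => ?_)
    (fun s hs t ht hst => ?_) (fun L hL => ?_)).symm
  · refine mem_filter.2 ⟨mem_univ _, hH.isExternalLine_insert_sum hs, ?_⟩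
    rw [hH.insert_sum_inter hs]
    exact card_pos.1 (by rw [(mem_powersetCard.1 hs).2]; norm_num)
  · rw [← hH.insert_sum_inter hs, ← hH.insert_sum_inter ht]
    exact congrArg (· ∩ H) hst
  · obtain ⟨hL, hLH⟩ := (mem_filter.1 hL).2
    exact hH.exists_insert_sum_eq hL hLH

theorem isExternalLine_and_disjoint_image_add_sum (hH : IsConwellHeptad H)
    (hs : s ∈ H.powersetCard 3) :
    IsExternalLine (s.image (· + ∑ v ∈ s, v)) ∧
      s.image (· + ∑ v ∈ s, v) ∩ H = ∅ := by
  obtain ⟨p, hp, q, hq, r, hr, hpq, hpr, hqr, rfl⟩ :=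
    exists_eq_triple_of_mem_powersetCard_three hs
  have hqr' : p + q + (p + r) = q + r := by
    rw [add_comm p q, add_assoc, CharTwo.add_cancel_left]
  rw [image_add_sum_triple hpq hpr hqr]
  refine ⟨isExternalLine_triple (hH.2.2 p hp q hq hpq) (hH.2.2 p hp r hr hpr) ?_, ?_⟩
  · rw [hqr']
    exact hH.2.2 q hq r hr hqr
  · rw [hqr', insert_inter_of_notMem (hH.add_notMem hp hq hpq),
      insert_inter_of_notMem (hH.add_notMem hp hr hpr),
      singleton_inter_of_notMem (hH.add_notMem hq hr hqr)]

theorem biUnion_polarSupport_image_add_sum (hH : IsConwellHeptad H)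
    (hs : s ∈ H.powersetCard 3) :
    (s.image (· + ∑ v ∈ s, v)).biUnion (polarSupport H) = s := by
  obtain ⟨p, hp, q, hq, r, hr, hpq, hpr, hqr, rfl⟩ :=
    exists_eq_triple_of_mem_powersetCard_three hs
  have hqr' : p + q + (p + r) = q + r := by
    rw [add_comm p q, add_assoc, CharTwo.add_cancel_left]
  rw [image_add_sum_triple hpq hpr hqr, hqr', biUnion_insert, biUnion_insert,
    singleton_biUnion, hH.polarSupport_add hp hq hpq, hH.polarSupport_add hp hr hpr,
    hH.polarSupport_add hq hr hqr]
  ext x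
  simp only [mem_union, mem_insert, mem_singleton]
  tauto

theorem exists_image_add_sum_eq (hH : IsConwellHeptad H) {L : Finset V}
    (hL : IsExternalLine L) (hLH : L ∩ H = ∅) :
    ∃ s ∈ H.powersetCard 3, s.image (· + ∑ v ∈ s, v) = L := by
  have hnotMem : ∀ v ∈ L, v ∉ H := fun v hv hvH =>
    notMem_empty v (hLH ▸ mem_inter.2 ⟨hv, hvH⟩)
  obtain ⟨u, hu⟩ := card_pos.1 (by rw [hL.1]; norm_num)
  obtain ⟨x, hx, hux, rfl⟩ := hL.exists_eq_triple hu
  obtain ⟨a, ha, b, hb, hab, rfl⟩ :=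
    hH.exists_add_eq_of_notMem (hL.2.2 _ hu).2 (hnotMem _ hu)
  obtain ⟨c, hc, d, hd, hcd, rfl⟩ := hH.exists_add_eq_of_notMem hx (hnotMem _ (by simp))
  have hpolar : polar Q (a + b) (c + d) = 1 := by
    rwa [Q_add, (hL.2.2 _ hu).2, hx, CharTwo.add_self_eq_zero, zero_add] at hux
  obtain ⟨p, hp, q, hq, r, hr, hpq, hpr, hqr, h₁, h₂⟩ :=
    hH.exists_common_of_polar_add_add_eq_one ha hb hc hd hab hcd hpolar
  refine ⟨{p, q, r}, ?_, ?_⟩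
  · exact mem_powersetCard.2 ⟨by simp [insert_subset_iff, hp, hq, hr], card_eq_three.2
      ⟨p, q, r, hpq, hpr, hqr, rfl⟩⟩
  · rw [image_add_sum_triple hpq hpr hqr, h₁, h₂]

theorem card_filter_isExternalLine_inter_eq_empty (hH : IsConwellHeptad H) :
    #{L | IsExternalLine L ∧ L ∩ H = ∅} = 35 := by
  have hcard : #(H.powersetCard 3) = 35 := by rw [card_powersetCard, hH.1]; rfl
  rw [← hcard]
  refine (card_nbij (fun s => s.image (· + ∑ v ∈ s, v)) (fun s hs => ?_)
    (fun s hs t ht hst => ?_) (fun L hL => ?_)).symm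
  · exact mem_filter.2 ⟨mem_univ _, hH.isExternalLine_and_disjoint_image_add_sum hs⟩
  · rw [← hH.biUnion_polarSupport_image_add_sum hs,
      ← hH.biUnion_polarSupport_image_add_sum ht]
    exact congrArg (·.biUnion (polarSupport H)) hst
  · obtain ⟨hL, hLH⟩ := (mem_filter.1 hL).2
    exact hH.exists_image_add_sum_eq hL hLH

end IsConwellHeptad

/-- For any Conwell heptad, exactly 21 of the external lines meet it and exactly 35 are
disjoint from it. -/
theorem external_lines_meeting_heptad (H : Finset (Fin 6 → ZMod 2))
    (hH : IsConwellHeptad H) :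
    (Finset.univ.filter (fun L : Finset (Fin 6 → ZMod 2) =>
        L.card = 3 ∧ (∑ v ∈ L, v) = 0 ∧ (∀ v ∈ L, v ≠ 0 ∧ Q v = 1) ∧
          (L ∩ H).Nonempty)).card = 21 ∧
    (Finset.univ.filter (fun L : Finset (Fin 6 → ZMod 2) =>
        L.card = 3 ∧ (∑ v ∈ L, v) = 0 ∧ (∀ v ∈ L, v ≠ 0 ∧ Q v = 1) ∧
          L ∩ H = ∅)).card = 35 := by
  have hmeet := hH.card_filter_isExternalLine_inter_nonempty
  have hdisj := hH.card_filter_isExternalLine_inter_eq_empty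
  simp only [IsExternalLine, and_assoc] at hmeet hdisj
  exact ⟨hmeet, hdisj⟩
end

section
/- Any set of off-quadric points of PG(5,2) in which every two distinct points are joined by an external line has at most 7 elements: if S is a set of nonzero vectors of (Fin 6 → ZMod 2), each with Q-value 1, such that Q(a + b) = 1 for all distinct a, b ∈ S, then the cardinality of S is at most 7. -/
open Module

variable {K V : Type*} [Field K] [AddCommGroup V] [Module K V]

theorem LinearMap.BilinForm.linearIndependent_prodMk_one {ι : Type*} (B : LinearMap.BilinForm K V)
    (v : ι → V) {c d : K} (hcd : c ≠ d) (hoff : ∀ i j, i ≠ j → B (v i) (v j) = c)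
    (hdiag : ∀ i, B (v i) (v i) = d) :
    LinearIndependent K (fun i => (v i, (1 : K))) := by
  classical
  rw [linearIndependent_iff']
  intro s g hsum j hj
  have hv : ∑ i ∈ s, g i • v i = 0 := by simpa [Prod.fst_sum] using congrArg Prod.fst hsum
  have hg : ∑ i ∈ s, g i = 0 := by simpa [Prod.snd_sum] using congrArg Prod.snd hsum
  have hB : ∀ i, B (v j) (v i) = c + if i = j then d - c else 0 := by
    intro i
    split_ifs with hij
    · rw [hij, hdiag]; ring
    · rw [hoff j i (Ne.symm hij), add_zero]
  have : g j * (d - c) = 0 :=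
    calc g j * (d - c) = ∑ i ∈ s, g i * B (v j) (v i) := by
          simp only [hB, mul_add, Finset.sum_add_distrib, ← Finset.sum_mul, hg, zero_mul,
            mul_ite, mul_zero, Finset.sum_ite_eq' s j, if_pos hj, zero_add]
      _ = B (v j) (∑ i ∈ s, g i • v i) := by simp [map_sum]
      _ = 0 := by rw [hv, map_zero]
  exact (mul_eq_zero.mp this).resolve_right (sub_ne_zero.mpr hcd.symm)

theorem QuadraticForm.card_le_finrank_add_one_of_pairwise_add [FiniteDimensional K V]
    (q : QuadraticForm K V) (h3 : (3 : K) ≠ 0) (S : Finset V) (hS : ∀ a ∈ S, q a = 1)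
    (hpair : ∀ a ∈ S, ∀ b ∈ S, a ≠ b → q (a + b) = 1) :
    S.card ≤ finrank K V + 1 := by
  have hoff : ∀ a b : S, a ≠ b → q.polarBilin a b = -1 := by
    intro a b hab
    rw [QuadraticMap.polarBilin_apply_apply, QuadraticMap.polar,
      hpair a a.2 b b.2 (Subtype.coe_ne_coe.mpr hab), hS a a.2, hS b b.2]
    ring
  have hdiag : ∀ a : S, q.polarBilin a a = 2 := by
    intro a
    rw [QuadraticMap.polarBilin_apply_apply, QuadraticMap.polar_self, hS a a.2, two_smul,
      one_add_one_eq_two]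
  have hcd : (-1 : K) ≠ 2 := fun h => h3 (by linear_combination -h)
  have hli := LinearMap.BilinForm.linearIndependent_prodMk_one q.polarBilin (fun a : S => (a : V))
    hcd hoff hdiag
  simpa [Module.finrank_prod] using hli.fintype_card_le_finrank

def hyperbolicForm : QuadraticForm (ZMod 2) (Fin 6 → ZMod 2) :=
  QuadraticMap.proj 0 1 + QuadraticMap.proj 2 3 + QuadraticMap.proj 4 5

theorem hyperbolicForm_apply (v : Fin 6 → ZMod 2) : hyperbolicForm v = Q v := by
  simp [hyperbolicForm, QuadraticMap.proj_apply, Q]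

/-- Any set of off-quadric points of PG(5,2) in which every two distinct points are
joined by an external line has at most 7 elements. -/
theorem pairwise_external_set_card_le_seven (S : Finset (Fin 6 → ZMod 2))
    (hS : ∀ v ∈ S, v ≠ 0 ∧ Q v = 1)
    (hext : ∀ a ∈ S, ∀ b ∈ S, a ≠ b → Q (a + b) = 1) :
    S.card ≤ 7 := by
  have h := hyperbolicForm.card_le_finrank_add_one_of_pairwise_add (by decide) S
    (fun v hv => (hyperbolicForm_apply v).trans (hS v hv).2)
    (fun a ha b hb hab => (hyperbolicForm_apply _).trans (hext a ha b hb hab))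
  simpa using h
end
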